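/- arXiv:2308.06682 — 3 statements merged into one kernel-verified Lean document; each statement's English description precedes it below -/
import Mathlib

section
/- Let R be a nonzero commutative local ring and ϖ ∈ R a regular element that is not a unit and generates a prime ideal ϖR. Let M be a free R-module with basis {x, y}, and let J be an R-linear endomorphism of M satisfying J² = ϖ·id_M, J(x) ∈ R·y, and J(y) ∈ R·x. Then exactly one of the following two alternatives holds: (i) there is a basis {x₀, y₀} of M with R·x₀ = R·x and R·y₀ = R·y such that J(x₀) = ϖ·y₀ and J(y₀) = x₀; (ii) there is a basis {x₀, y₀} of M with R·x₀ = R·x and R·y₀ = R·y such that J(x₀) = y₀ and J(y₀) = ϖ·x₀. -/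
/-!
Write `J x = a • y` and `J y = c • x`. Then `J² = ϖ` forces `a * c = ϖ`, and since `ϖR` is prime
and `ϖ` is regular, one of `a`, `c` is a unit; rescaling `x` by `c` or `y` by `a` gives the
normal forms (i) and (ii). Rescaling a basis along its lines by units changes the coefficient
`a` only up to a unit, and in (i) it becomes `ϖ`, in (ii) it becomes `1`; since `ϖ` is not a unit,
the two normal forms exclude each other.
-/

open Submodule

section Basis

variable {R M ι : Type*} [CommRing R] [AddCommGroup M] [Module R M]

lemma Module.Basis.smul_left_injective (b : Module.Basis ι R M) (i : ι) :
    Function.Injective fun r : R => r • b i := by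
  intro r s h
  simpa using congrArg (fun m => b.repr m i) h

lemma Module.Basis.exists_isUnit_of_span_singleton_eq (b : Module.Basis ι R M) (i : ι) {v : M}
    (h : span R {v} = span R {b i}) : ∃ u : R, IsUnit u ∧ v = u • b i := by
  obtain ⟨u, hu⟩ := mem_span_singleton.mp (h ▸ mem_span_singleton_self v)
  obtain ⟨s, hs⟩ := mem_span_singleton.mp (h.symm ▸ mem_span_singleton_self (b i))
  have hsu : s * u = 1 := b.smul_left_injective i (by simp only [mul_smul, hu, hs, one_smul])
  exact ⟨u, .of_mul_eq_one s (mul_comm s u ▸ hsu), hu.symm⟩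

lemma Module.Basis.span_singleton_unitsSMul (b : Module.Basis ι R M) (w : ι → Rˣ) (i : ι) :
    span R {b.unitsSMul w i} = span R {b i} := by
  rw [b.unitsSMul_apply]
  exact span_singleton_smul_eq (w i).isUnit _

lemma Module.Basis.associated_of_span_singleton_eq {f : M →ₗ[R] M} (b b₀ : Module.Basis ι R M)
    {i j : ι} (hi : span R {b₀ i} = span R {b i}) (hj : span R {b₀ j} = span R {b j}) {a r : R}
    (ha : f (b i) = a • b j) (hr : f (b₀ i) = r • b₀ j) : Associated a r := by
  obtain ⟨u, hu, hui⟩ := b.exists_isUnit_of_span_singleton_eq i hi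
  obtain ⟨v, hv, hvj⟩ := b.exists_isUnit_of_span_singleton_eq j hj
  have hua : u * a = r * v := b.smul_left_injective j <| by
    simpa only [hui, hvj, map_smul, ha, smul_smul, mul_comm a u] using hr
  refine ⟨hu.unit * hv.unit⁻¹, ?_⟩
  calc a * ↑(hu.unit * hv.unit⁻¹) = u * a * ↑hv.unit⁻¹ := by
        simp only [Units.val_mul, IsUnit.unit_spec]; ring
    _ = r := by rw [hua, mul_assoc, hv.mul_val_inv, mul_one]

end Basis

lemma isUnit_of_mul_eq_of_dvd {R : Type*} [CommRing R] {ϖ a c : R} (hreg : ϖ ∈ nonZeroDivisors R)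
    (hac : a * c = ϖ) (hdvd : ϖ ∣ a) : IsUnit c := by
  obtain ⟨d, rfl⟩ := hdvd
  have hdc : d * c * ϖ = 1 * ϖ := by rw [one_mul]; nth_rw 2 [← hac]; ring
  exact .of_mul_eq_one d (mul_comm d c ▸ (mul_cancel_right_mem_nonZeroDivisors hreg).mp hdc)

lemma isUnit_or_isUnit_of_mul_eq {R : Type*} [CommRing R] {ϖ a c : R}
    (hreg : ϖ ∈ nonZeroDivisors R) (hprime : (Ideal.span {ϖ}).IsPrime) (hac : a * c = ϖ) :
    IsUnit a ∨ IsUnit c := by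
  have hmem : a * c ∈ Ideal.span {ϖ} := hac ▸ Ideal.mem_span_singleton_self ϖ
  rcases hprime.mem_or_mem hmem with ha | hc
  · exact .inr (isUnit_of_mul_eq_of_dvd hreg hac (Ideal.mem_span_singleton.mp ha))
  · exact .inl (isUnit_of_mul_eq_of_dvd hreg (mul_comm a c ▸ hac) (Ideal.mem_span_singleton.mp hc))

section FinTwo

variable {R M : Type*} [CommRing R] [AddCommGroup M] [Module R M] {ϖ a c : R}
  (b : Module.Basis (Fin 2) R M) {J : M →ₗ[R] M}

lemma mul_eq_of_apply_apply_eq_smul (hJ2 : ∀ m, J (J m) = ϖ • m) (ha : J (b 0) = a • b 1)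
    (hc : J (b 1) = c • b 0) : a * c = ϖ :=
  b.smul_left_injective 0 <| by
    simpa only [ha, map_smul, hc, smul_smul, mul_comm c a] using hJ2 (b 0)

lemma exists_basis_of_isUnit_right (ha : J (b 0) = a • b 1) (hc : J (b 1) = c • b 0)
    (hac : a * c = ϖ) (hcu : IsUnit c) :
    ∃ b₀ : Module.Basis (Fin 2) R M,
      span R {b₀ 0} = span R {b 0} ∧ span R {b₀ 1} = span R {b 1} ∧
      J (b₀ 0) = ϖ • b₀ 1 ∧ J (b₀ 1) = b₀ 0 := by
  refine ⟨b.unitsSMul ![hcu.unit, 1], b.span_singleton_unitsSMul _ 0,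
    b.span_singleton_unitsSMul _ 1, ?_, ?_⟩ <;>
  simp [b.unitsSMul_apply, ha, hc, smul_smul, mul_comm c a, hac]

lemma exists_basis_of_isUnit_left (ha : J (b 0) = a • b 1) (hc : J (b 1) = c • b 0)
    (hac : a * c = ϖ) (hau : IsUnit a) :
    ∃ b₀ : Module.Basis (Fin 2) R M,
      span R {b₀ 0} = span R {b 0} ∧ span R {b₀ 1} = span R {b 1} ∧
      J (b₀ 0) = b₀ 1 ∧ J (b₀ 1) = ϖ • b₀ 0 := by
  refine ⟨b.unitsSMul ![1, hau.unit], b.span_singleton_unitsSMul _ 0,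
    b.span_singleton_unitsSMul _ 1, ?_, ?_⟩ <;>
  simp [b.unitsSMul_apply, ha, hc, smul_smul, hac]

end FinTwo

theorem quaternionic_module_classification_general (R : Type*) [CommRing R]
    (ϖ : R) (hreg : ϖ ∈ nonZeroDivisors R) (hunit : ¬IsUnit ϖ)
    (hprime : (Ideal.span ({ϖ} : Set R)).IsPrime)
    (M : Type*) [AddCommGroup M] [Module R M] (b : Module.Basis (Fin 2) R M)
    (J : M →ₗ[R] M) (hJ2 : ∀ m, J (J m) = ϖ • m)
    (hJx : J (b 0) ∈ Submodule.span R ({b 1} : Set M))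
    (hJy : J (b 1) ∈ Submodule.span R ({b 0} : Set M)) :
    Xor'
      (∃ b₀ : Module.Basis (Fin 2) R M,
        Submodule.span R ({b₀ 0} : Set M) = Submodule.span R ({b 0} : Set M) ∧
        Submodule.span R ({b₀ 1} : Set M) = Submodule.span R ({b 1} : Set M) ∧
        J (b₀ 0) = ϖ • b₀ 1 ∧ J (b₀ 1) = b₀ 0)
      (∃ b₀ : Module.Basis (Fin 2) R M,
        Submodule.span R ({b₀ 0} : Set M) = Submodule.span R ({b 0} : Set M) ∧
        Submodule.span R ({b₀ 1} : Set M) = Submodule.span R ({b 1} : Set M) ∧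
        J (b₀ 0) = b₀ 1 ∧ J (b₀ 1) = ϖ • b₀ 0) := by
  obtain ⟨a, ha⟩ := mem_span_singleton.mp hJx
  obtain ⟨c, hc⟩ := mem_span_singleton.mp hJy
  have hac := mul_eq_of_apply_apply_eq_smul b hJ2 ha.symm hc.symm
  refine (xor_iff_or_and_not_and _ _).mpr ⟨?_, ?_⟩
  · rcases isUnit_or_isUnit_of_mul_eq hreg hprime hac with hau | hcu
    · exact .inr (exists_basis_of_isUnit_left b ha.symm hc.symm hac hau)
    · exact .inl (exists_basis_of_isUnit_right b ha.symm hc.symm hac hcu)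
  · rintro ⟨⟨b₁, h₁0, h₁1, hJ₁, -⟩, ⟨b₂, h₂0, h₂1, hJ₂, -⟩⟩
    have haϖ := b.associated_of_span_singleton_eq b₁ h₁0 h₁1 ha.symm hJ₁
    have ha1 := b.associated_of_span_singleton_eq b₂ h₂0 h₂1 ha.symm (one_smul R (b₂ 1) ▸ hJ₂)
    exact hunit (associated_one_iff_isUnit.mp (haϖ.symm.trans ha1))

/-- Let `R` be a nonzero commutative local ring and `ϖ ∈ R` a regular
non-unit generating a prime ideal.  Let `M` be free with basis `{x, y}` and `J` an
endomorphism with `J² = ϖ·id`, `J(x) ∈ R·y`, `J(y) ∈ R·x`.  Then exactly one of the two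
alternatives holds: a basis `{x₀, y₀}` with `R·x₀ = R·x`, `R·y₀ = R·y` such that
`J(x₀) = ϖ·y₀, J(y₀) = x₀`, or one such that `J(x₀) = y₀, J(y₀) = ϖ·x₀`. -/
theorem quaternionic_module_classification (R : Type*) [CommRing R] [IsLocalRing R]
    (ϖ : R) (hreg : ϖ ∈ nonZeroDivisors R) (hunit : ¬IsUnit ϖ)
    (hprime : (Ideal.span ({ϖ} : Set R)).IsPrime)
    (M : Type*) [AddCommGroup M] [Module R M] (b : Module.Basis (Fin 2) R M)
    (J : M →ₗ[R] M) (hJ2 : ∀ m, J (J m) = ϖ • m)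
    (hJx : J (b 0) ∈ Submodule.span R ({b 1} : Set M))
    (hJy : J (b 1) ∈ Submodule.span R ({b 0} : Set M)) :
    Xor'
      (∃ b₀ : Module.Basis (Fin 2) R M,
        Submodule.span R ({b₀ 0} : Set M) = Submodule.span R ({b 0} : Set M) ∧
        Submodule.span R ({b₀ 1} : Set M) = Submodule.span R ({b 1} : Set M) ∧
        J (b₀ 0) = ϖ • b₀ 1 ∧ J (b₀ 1) = b₀ 0)
      (∃ b₀ : Module.Basis (Fin 2) R M,
        Submodule.span R ({b₀ 0} : Set M) = Submodule.span R ({b 0} : Set M) ∧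
        Submodule.span R ({b₀ 1} : Set M) = Submodule.span R ({b 1} : Set M) ∧
        J (b₀ 0) = b₀ 1 ∧ J (b₀ 1) = ϖ • b₀ 0) :=
  quaternionic_module_classification_general R ϖ hreg hunit hprime M b J hJ2 hJx hJy
end

section
/- Let R be a commutative ring and ϖ ∈ R, and let S, T, T′ be as follows: S is the subring of M₂(R) of matrices (a b; c d) with c ∈ ϖR, T = R² with the standard S-action, and T′ = R² with the twisted S-action in which (a b; ϖc d) ∈ S acts by the matrix (d c; ϖb a). Then an R-linear map f : T′ → T is S-linear if and only if its matrix with respect to the standard bases has the form (0 μ; ϖμ 0) for some μ ∈ R. In particular, μ ↦ (0 μ; ϖμ 0) is an R-module isomorphism from R onto Hom_S(T′, T), so Hom_S(T′, T) is free of rank 1 over R. -/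
open Matrix

/-- The `R`-module of maps `T′ → T` that are linear over the order
`S = {(a b; c d) ∈ M₂(R) : c ∈ ϖR}`, where `T = R²` carries the standard `S`-action and `T′ = R²`
carries the twisted `S`-action in which `(a b; ϖc d)` acts by the matrix `(d c; ϖb a)`. -/
def twistedHom (R : Type*) [CommRing R] (ϖ : R) :
    Submodule R ((Fin 2 → R) →ₗ[R] (Fin 2 → R)) where
  carrier := {f | ∀ (a b c d : R) (v : Fin 2 → R),
    f ((!![d, c; ϖ * b, a]).mulVec v) = (!![a, b; ϖ * c, d]).mulVec (f v)}
  add_mem' := by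
    intro f g hf hg a b c d v
    simp only [LinearMap.add_apply, hf a b c d v, hg a b c d v, Matrix.mulVec_add]
  zero_mem' := by
    intro a b c d v
    simp only [LinearMap.zero_apply, Matrix.mulVec_zero]
  smul_mem' := by
    intro r f hf a b c d v
    simp only [LinearMap.smul_apply, hf a b c d v, Matrix.mulVec_smul]

section aux
variable {R : Type*} [CommRing R] {ϖ : R}

lemma mulVec_fin2 (A : Matrix (Fin 2) (Fin 2) R) (v : Fin 2 → R) :
    A.mulVec v = ![A 0 0 * v 0 + A 0 1 * v 1, A 1 0 * v 0 + A 1 1 * v 1] := by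
  funext i
  fin_cases i <;> simp [Matrix.mulVec, dotProduct, Fin.sum_univ_two]

lemma twisted_mem_of (μ : R) (f : (Fin 2 → R) →ₗ[R] (Fin 2 → R))
    (hf : ∀ v, f v = (!![0, μ; ϖ * μ, 0]).mulVec v) : f ∈ twistedHom R ϖ := by
  intro a b c d v
  simp only [hf]
  funext i
  fin_cases i <;>
    simp only [mulVec_fin2, Matrix.cons_val_zero, Matrix.cons_val_one, Matrix.head_cons,
      Matrix.cons_val', Matrix.head_fin_const, Matrix.of_apply, Matrix.cons_val_fin_one,
      Fin.isValue] <;> ring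

lemma twisted_forward (f : (Fin 2 → R) →ₗ[R] (Fin 2 → R)) (hf : f ∈ twistedHom R ϖ) :
    ∀ v, f v = (!![0, f ![0,1] 0; ϖ * f ![0,1] 0, 0]).mulVec v := by
  have h1 : f ![1,0] 0 = 0 := by
    have h := hf 0 0 0 1 ![1,0]
    simp only [mulVec_fin2, Matrix.cons_val_zero, Matrix.cons_val_one, Matrix.head_cons,
      Matrix.cons_val', Matrix.head_fin_const, Matrix.of_apply, Matrix.cons_val_fin_one] at h
    norm_num at h
    exact congrFun h 0
  have h2 : f ![0,1] 1 = 0 := by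
    have h := hf 1 0 0 0 ![0,1]
    simp only [mulVec_fin2, Matrix.cons_val_zero, Matrix.cons_val_one, Matrix.head_cons,
      Matrix.cons_val', Matrix.head_fin_const, Matrix.of_apply, Matrix.cons_val_fin_one] at h
    norm_num at h
    simpa using congrFun h 1
  have h3 : f ![1,0] 1 = ϖ * f ![0,1] 0 := by
    have h := hf 0 1 0 0 ![1,0]
    simp only [mulVec_fin2, Matrix.cons_val_zero, Matrix.cons_val_one, Matrix.head_cons,
      Matrix.cons_val', Matrix.head_fin_const, Matrix.of_apply, Matrix.cons_val_fin_one] at h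
    norm_num at h
    have h0ϖ : f ![0, ϖ] = ϖ • f ![0,1] := by
      rw [show (![0, ϖ] : Fin 2 → R) = ϖ • ![0,1] by funext i; fin_cases i <;> simp,
        f.map_smul]
    rw [h0ϖ] at h
    have := congrFun h 0
    simpa [mul_comm] using this.symm
  intro v
  have hv : v = v 0 • ![1,0] + v 1 • ![0,1] := by
    funext i; fin_cases i <;> simp
  conv_lhs => rw [hv]
  rw [f.map_add, f.map_smul, f.map_smul]
  funext i
  fin_cases i <;>
    simp [mulVec_fin2, h1, h2, h3, Matrix.vecHead, Matrix.vecTail] <;> ring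

end aux

/-- An `R`-linear map `f : T′ → T` is `S`-linear if and only if its matrix has
the form `(0 μ; ϖμ 0)` for some `μ ∈ R`; in particular `μ ↦ (0 μ; ϖμ 0)` is an `R`-module
isomorphism of `R` onto `Hom_S(T′, T)`, which is therefore free of rank 1 over `R`. -/
theorem twistedHom_eq_and_free_rank_one (R : Type*) [CommRing R] (ϖ : R) :
    (∀ f : (Fin 2 → R) →ₗ[R] (Fin 2 → R),
      f ∈ twistedHom R ϖ ↔ ∃ μ : R, ∀ v, f v = (!![0, μ; ϖ * μ, 0]).mulVec v) ∧
    ∃ e : R ≃ₗ[R] ↥(twistedHom R ϖ),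
      ∀ (μ : R) (v : Fin 2 → R),
        ((e μ : (Fin 2 → R) →ₗ[R] (Fin 2 → R)) v) = (!![0, μ; ϖ * μ, 0]).mulVec v := by
  constructor
  · intro f
    exact ⟨fun hf => ⟨f ![0,1] 0, twisted_forward f hf⟩, fun ⟨μ, hμ⟩ => twisted_mem_of μ f hμ⟩
  · refine ⟨{
      toFun := fun μ => ⟨(Matrix.mulVecLin !![0, μ; ϖ * μ, 0]),
        twisted_mem_of μ _ (fun v => rfl)⟩
      map_add' := ?_
      map_smul' := ?_
      invFun := fun f => (f : (Fin 2 → R) →ₗ[R] (Fin 2 → R)) ![0,1] 0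
      left_inv := ?_
      right_inv := ?_ }, fun μ v => rfl⟩
    · intro x y
      apply Subtype.ext; apply LinearMap.ext; intro v
      funext i
      fin_cases i <;> simp [mulVec_fin2] <;> ring
    · intro r x
      apply Subtype.ext; apply LinearMap.ext; intro v
      funext i
      fin_cases i <;> simp [mulVec_fin2] <;> ring
    · intro μ
      simp [mulVec_fin2]
    · intro f
      apply Subtype.ext; apply LinearMap.ext; intro v
      exact (twisted_forward (f : (Fin 2 → R) →ₗ[R] (Fin 2 → R)) f.2 v).symm
end

section
/- Let τ be a point of the complex upper half plane ℍ, and let μ ∈ M₂(ℝ) satisfy tr(μ) = 0 and det(μ) > 0 (equivalently, μ² = −det(μ)·I with det(μ) > 0; in particular μ is invertible). Let J_τ : M₂(ℝ) → M₂(ℝ) be the ℝ-linear map characterized by Φ_τ(J_τ(A)) = i·Φ_τ(A) for all A (well defined since Φ_τ is bijective); then J_τ² = −id. Define the ℝ-bilinear form E on M₂(ℝ) by E(A, A′) = tr(μ⁻¹ · A · (A′)^*). Then: (i) E is alternating, i.e., E(A, A) = 0 for all A; (ii) E(J_τ(A), J_τ(A′)) = E(A, A′) for all A, A′; and (iii)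 the bilinear form (A, A′) ↦ E(A, J_τ(A′)) is symmetric, and either it or its negative is positive definite. -/
/-!
`J_τ` is right multiplication by the matrix `T_τ` with `T_τ·(τ, 1)ᵗ = i·(τ, 1)ᵗ`, which has trace
`0` and determinant `1`. For `2 × 2` matrices `X^* = tr(X)·1 - X`, so `μ⁻¹` and `T_τ` are negated
by the involution. Then (i) and (ii) follow from `A·A^* = det(A)·1`, and the symmetry in (iii)
from `tr X = tr X^*`. For definiteness, `Φ_τ` turns `E(A, J_τ A)·(det μ · Im τ · μ₀₁)` into the
Hermitian form `|μ₀₁ z₁ + μ₀₀ z₀|² + det μ · |z₀|²` on `ℂ²`, which is positive definite.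
-/

open Matrix Complex

/-- The ℝ-linear map `Φ_τ : M₂(ℝ) → ℂ²`, sending `A = (a b; c d)` to
`A·(τ, 1)ᵗ = (aτ + b, cτ + d)`. -/
noncomputable def PhiL (τ : ℂ) : Matrix (Fin 2) (Fin 2) ℝ →ₗ[ℝ] (Fin 2 → ℂ) where
  toFun A := fun i => (A i 0 : ℂ) * τ + (A i 1 : ℂ)
  map_add' A B := by
    funext i
    simp only [Matrix.add_apply, Pi.add_apply, Complex.ofReal_add]
    ring
  map_smul' c A := by
    funext i
    simp only [Matrix.smul_apply, Pi.smul_apply, smul_eq_mul, Complex.ofReal_mul,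
      RingHom.id_apply, Complex.real_smul]
    ring

/-- The ℝ-bilinear form `E(A, A′) = tr(μ⁻¹·A·(A′)^*)` on `M₂(ℝ)`, where `(A′)^*` is the
standard involution (adjugate). -/
noncomputable def Eform (μ A A' : Matrix (Fin 2) (Fin 2) ℝ) : ℝ :=
  (μ⁻¹ * A * A'.adjugate).trace

namespace Matrix

variable {R : Type*} [CommRing R]

theorem adjugate_fin_two_eq_trace_smul_one_sub (A : Matrix (Fin 2) (Fin 2) R) :
    A.adjugate = A.trace • 1 - A := by
  ext i j
  fin_cases i <;> fin_cases j <;> simp [adjugate_fin_two, trace_fin_two]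

theorem adjugate_fin_two_of_trace_eq_zero {A : Matrix (Fin 2) (Fin 2) R} (h : A.trace = 0) :
    A.adjugate = -A := by
  rw [adjugate_fin_two_eq_trace_smul_one_sub, h, zero_smul, zero_sub]

theorem trace_adjugate_fin_two (A : Matrix (Fin 2) (Fin 2) R) : A.adjugate.trace = A.trace := by
  rw [adjugate_fin_two_eq_trace_smul_one_sub, trace_sub, trace_smul, trace_one, Fintype.card_fin,
    smul_eq_mul]
  push_cast
  ring

theorem trace_inv_fin_two_eq_zero {A : Matrix (Fin 2) (Fin 2) R} (h : A.trace = 0) :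
    A⁻¹.trace = 0 := by
  rw [inv_def, trace_smul, trace_adjugate_fin_two, h, smul_zero]

theorem trace_mul_adjugate_mul_comm {ν T : Matrix (Fin 2) (Fin 2) R} (hν : ν.trace = 0)
    (hT : T.trace = 0) (A B : Matrix (Fin 2) (Fin 2) R) :
    (ν * A * (B * T).adjugate).trace = (ν * B * (A * T).adjugate).trace := by
  have hadj : ∀ X : Matrix (Fin 2) (Fin 2) R, (X * T).adjugate = -(T * X.adjugate) := fun X => by
    rw [adjugate_mul_distrib, adjugate_fin_two_of_trace_eq_zero hT, neg_mul]
  calc (ν * A * (B * T).adjugate).trace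
      = (ν * A * (B * T).adjugate).adjugate.trace := (trace_adjugate_fin_two _).symm
    _ = (B * T * A.adjugate * ν.adjugate).trace := by
        simp [adjugate_mul_distrib, adjugate_adjugate', Matrix.mul_assoc]
    _ = (ν * B * (A * T).adjugate).trace := by
        rw [adjugate_fin_two_of_trace_eq_zero hν, hadj, trace_mul_comm, Matrix.mul_neg,
          Matrix.neg_mul]
        simp only [Matrix.mul_assoc]

theorem fin_two_apply_one_one_of_trace_eq_zero {A : Matrix (Fin 2) (Fin 2) R} (h : A.trace = 0) :
    A 1 1 = -A 0 0 :=
  eq_neg_of_add_eq_zero_right (by rwa [trace_fin_two] at h)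

theorem fin_two_apply_zero_one_ne_zero_of_trace_eq_zero_of_det_pos [LinearOrder R]
    [IsStrictOrderedRing R] {A : Matrix (Fin 2) (Fin 2) R} (htr : A.trace = 0) (hdet : 0 < A.det) :
    A 0 1 ≠ 0 := by
  intro h
  rw [det_fin_two, h, fin_two_apply_one_one_of_trace_eq_zero htr] at hdet
  nlinarith [sq_nonneg (A 0 0)]

end Matrix

theorem Eform_self {μ : Matrix (Fin 2) (Fin 2) ℝ} (h : μ.trace = 0) (A : Matrix (Fin 2) (Fin 2) ℝ) :
    Eform μ A A = 0 := by
  rw [Eform, Matrix.mul_assoc, mul_adjugate, Matrix.mul_smul, Matrix.mul_one, trace_smul,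
    trace_inv_fin_two_eq_zero h, smul_zero]

theorem Eform_mul_mul (μ A B T : Matrix (Fin 2) (Fin 2) ℝ) :
    Eform μ (A * T) (B * T) = T.det * Eform μ A B := by
  rw [Eform, Eform, adjugate_mul_distrib, Matrix.mul_assoc, Matrix.mul_assoc,
    ← Matrix.mul_assoc T, mul_adjugate, Matrix.smul_mul, Matrix.one_mul, Matrix.mul_smul,
    Matrix.mul_smul, trace_smul, smul_eq_mul, Matrix.mul_assoc]

theorem Eform_mul_comm {μ T : Matrix (Fin 2) (Fin 2) ℝ} (hμ : μ.trace = 0) (hT : T.trace = 0)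
    (A B : Matrix (Fin 2) (Fin 2) ℝ) : Eform μ A (B * T) = Eform μ B (A * T) :=
  trace_mul_adjugate_mul_comm (trace_inv_fin_two_eq_zero hμ) hT A B

theorem PhiL_injective {τ : ℂ} (hτ : τ.im ≠ 0) : Function.Injective (PhiL τ) := by
  rw [← LinearMap.ker_eq_bot, LinearMap.ker_eq_bot']
  intro A hA
  ext i j
  have h := congrFun hA i
  have him : A i 0 = 0 := by
    simpa [PhiL, hτ] using congrArg Complex.im h
  have hre : A i 1 = 0 := by
    simpa [PhiL, him] using congrArg Complex.re h
  fin_cases j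
  · exact him
  · exact hre

noncomputable def complexStructureMatrix (τ : ℂ) : Matrix (Fin 2) (Fin 2) ℝ :=
  !![τ.re / τ.im, -(τ.re ^ 2 + τ.im ^ 2) / τ.im; 1 / τ.im, -τ.re / τ.im]

theorem trace_complexStructureMatrix (τ : ℂ) : (complexStructureMatrix τ).trace = 0 := by
  rw [complexStructureMatrix, trace_fin_two_of, neg_div, add_neg_cancel]

theorem det_complexStructureMatrix {τ : ℂ} (hτ : τ.im ≠ 0) :
    (complexStructureMatrix τ).det = 1 := by
  rw [complexStructureMatrix, det_fin_two_of]
  field_simp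
  ring

theorem complexStructureMatrix_mul_self {τ : ℂ} (hτ : τ.im ≠ 0) :
    complexStructureMatrix τ * complexStructureMatrix τ = -1 := by
  have h := mul_adjugate (complexStructureMatrix τ)
  rwa [adjugate_fin_two_of_trace_eq_zero (trace_complexStructureMatrix τ),
    det_complexStructureMatrix hτ, one_smul, Matrix.mul_neg, neg_eq_iff_eq_neg] at h

theorem PhiL_mul_complexStructureMatrix {τ : ℂ} (hτ : τ.im ≠ 0) (A : Matrix (Fin 2) (Fin 2) ℝ) :
    PhiL τ (A * complexStructureMatrix τ) = I • PhiL τ A := by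
  funext i
  apply Complex.ext
  · simp [PhiL, complexStructureMatrix, mul_apply, Fin.sum_univ_two, sq]
    field_simp
    ring
  · simp [PhiL, complexStructureMatrix, mul_apply, Fin.sum_univ_two, sq]
    field_simp

theorem Eform_mul_complexStructureMatrix_mul_eq {μ : Matrix (Fin 2) (Fin 2) ℝ} (htr : μ.trace = 0)
    (hdet : μ.det ≠ 0) {τ : ℂ} (hτ : τ.im ≠ 0) (A : Matrix (Fin 2) (Fin 2) ℝ) :
    Eform μ A (A * complexStructureMatrix τ) * (μ.det * τ.im * μ 0 1) =
      normSq (μ 0 1 * PhiL τ A 1 + μ 0 0 * PhiL τ A 0) + μ.det * normSq (PhiL τ A 0) := by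
  have h11 := fin_two_apply_one_one_of_trace_eq_zero htr
  have hdet_eq : μ.det = -μ 0 0 ^ 2 - μ 0 1 * μ 1 0 := by rw [det_fin_two, h11]; ring
  rw [Eform, Matrix.inv_def, Ring.inverse_eq_inv', Matrix.smul_mul, Matrix.smul_mul, trace_smul,
    smul_eq_mul, hdet_eq]
  rw [hdet_eq] at hdet
  simp only [PhiL, LinearMap.coe_mk, AddHom.coe_mk, normSq_apply, add_re, add_im, mul_re, mul_im,
    ofReal_re, ofReal_im, trace_fin_two, mul_apply, Fin.sum_univ_two, adjugate_fin_two,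
    complexStructureMatrix, of_apply, cons_val', cons_val_zero, cons_val_one,
    empty_val', cons_val_fin_one, h11]
  field_simp
  ring

theorem mul_Eform_mul_complexStructureMatrix_pos {μ : Matrix (Fin 2) (Fin 2) ℝ}
    (htr : μ.trace = 0) (hdet : 0 < μ.det) {τ : ℂ} (hτ : 0 < τ.im)
    {A : Matrix (Fin 2) (Fin 2) ℝ} (hA : A ≠ 0) :
    0 < μ 0 1 * Eform μ A (A * complexStructureMatrix τ) := by
  have hμ := fin_two_apply_zero_one_ne_zero_of_trace_eq_zero_of_det_pos htr hdet
  have hsum : 0 < normSq (μ 0 1 * PhiL τ A 1 + μ 0 0 * PhiL τ A 0) +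
      μ.det * normSq (PhiL τ A 0) := by
    by_cases hz : PhiL τ A 0 = 0
    · have hw : PhiL τ A 1 ≠ 0 := by
        intro hw
        refine hA (PhiL_injective hτ.ne' ?_)
        rw [map_zero]
        funext i
        fin_cases i
        · exact hz
        · exact hw
      simpa [hz, normSq_pos, hμ] using hw
    · exact add_pos_of_nonneg_of_pos (normSq_nonneg _) (mul_pos hdet (normSq_pos.2 hz))
  rw [← Eform_mul_complexStructureMatrix_mul_eq htr hdet.ne' hτ.ne'] at hsum
  refine pos_of_mul_pos_right (a := μ.det * τ.im) ?_ (mul_pos hdet hτ).le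
  linarith

/-- Let `τ ∈ ℍ` and `μ ∈ M₂(ℝ)` with `tr μ = 0`, `det μ > 0`, and let `J_τ`
be the ℝ-linear endomorphism of `M₂(ℝ)` with `Φ_τ(J_τ(A)) = i·Φ_τ(A)`.  Then `J_τ² = −id`, and
the form `E(A, A′) = tr(μ⁻¹·A·(A′)^*)` is alternating, `J_τ`-invariant, the form
`(A, A′) ↦ E(A, J_τ(A′))` is symmetric, and either it or its negative is positive definite. -/
theorem riemann_form_twisted (τ : ℂ) (hτ : 0 < τ.im)
    (μ : Matrix (Fin 2) (Fin 2) ℝ) (htr : μ.trace = 0) (hdet : 0 < μ.det)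
    (J : Matrix (Fin 2) (Fin 2) ℝ →ₗ[ℝ] Matrix (Fin 2) (Fin 2) ℝ)
    (hJ : ∀ A, PhiL τ (J A) = Complex.I • PhiL τ A) :
    (∀ A, J (J A) = -A) ∧
    (∀ A, Eform μ A A = 0) ∧
    (∀ A A', Eform μ (J A) (J A') = Eform μ A A') ∧
    (∀ A A', Eform μ A (J A') = Eform μ A' (J A)) ∧
    ((∀ A, A ≠ 0 → 0 < Eform μ A (J A)) ∨ (∀ A, A ≠ 0 → Eform μ A (J A) < 0)) := by
  have hJ_eq : ∀ A, J A = A * complexStructureMatrix τ := fun A =>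
    PhiL_injective hτ.ne' (by rw [hJ, PhiL_mul_complexStructureMatrix hτ.ne'])
  simp only [hJ_eq]
  refine ⟨fun A => ?_, Eform_self htr, fun A A' => ?_,
    Eform_mul_comm htr (trace_complexStructureMatrix τ), ?_⟩
  · rw [Matrix.mul_assoc, complexStructureMatrix_mul_self hτ.ne', Matrix.mul_neg, Matrix.mul_one]
  · rw [Eform_mul_mul, det_complexStructureMatrix hτ.ne', one_mul]
  rcases (fin_two_apply_zero_one_ne_zero_of_trace_eq_zero_of_det_pos htr hdet).lt_or_gt
    with hneg | hpos
  · exact Or.inr fun A hA =>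
      neg_of_mul_pos_right (mul_Eform_mul_complexStructureMatrix_pos htr hdet hτ hA) hneg.le
  · exact Or.inl fun A hA =>
      pos_of_mul_pos_right (mul_Eform_mul_complexStructureMatrix_pos htr hdet hτ hA) hpos.le
end
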